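/- There exists a set E contained in the power series ring 𝔽₃⟦t⟧ of Hausdorff dimension 1 that contains no nondegenerate three-term arithmetic progression; that is, there are no three distinct points x, y, z ∈ E with x + y + z = 0 (equivalently, x + z = 2y, since the field has characteristic 3). In particular, a Hausdorff-dimension analogue of the finite-field capset theorem fails in this limiting setting. -/

import Mathlib

open MeasureTheory
open scoped ENNReal Classical

variable (F : Type*) [Field F] [Fintype F]

/-- The distance on the field of formal Laurent series over a finite field `F` of
cardinality `q`, given by `d(x,y) = q^{-order(x-y)}` for `x ≠ y` and `d(x,x) = 0`. -/
noncomputable def laurentDist (x y : LaurentSeries F) : ℝ :=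
  if x = y then 0 else (Fintype.card F : ℝ) ^ (-(x - y).order)

lemma laurentDist_nonneg (x y : LaurentSeries F) : 0 ≤ laurentDist F x y := by
  unfold laurentDist
  split
  · exact le_refl 0
  · positivity

/-- The metric on `𝔽_q((t))` with `|x| = q^{-M}` when `x = Σ_{j ≥ M} x_j t^j`, `x_M ≠ 0`;
with this metric the ring of integers `𝔽_q⟦t⟧` has Hausdorff dimension `1`. -/
noncomputable instance LaurentSeries.metricSpace : MetricSpace (LaurentSeries F) where
  dist := laurentDist F
  dist_self x := by simp [laurentDist]
  dist_comm x y := by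
    show laurentDist F x y = laurentDist F y x
    rcases eq_or_ne x y with rfl | h
    · rfl
    · unfold laurentDist
      rw [if_neg h, if_neg h.symm, ← HahnSeries.order_neg (f := x - y), neg_sub]
  dist_triangle x y z := by
    show laurentDist F x z ≤ laurentDist F x y + laurentDist F y z
    have hq : (1 : ℝ) ≤ (Fintype.card F : ℝ) := by
      exact_mod_cast Nat.one_le_iff_ne_zero.mpr Fintype.card_ne_zero
    have hq0 : (0 : ℝ) < (Fintype.card F : ℝ) := by exact_mod_cast Fintype.card_pos
    rcases eq_or_ne x z with rfl | hxz
    · have h0 : laurentDist F x x = 0 := by simp [laurentDist]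
      rw [h0]
      exact add_nonneg (laurentDist_nonneg F x y) (laurentDist_nonneg F y x)
    · unfold laurentDist
      rw [if_neg hxz]
      rcases eq_or_ne x y with rfl | hxy
      · simp [if_neg hxz]
      rcases eq_or_ne y z with rfl | hyz
      · simp [if_neg hxy]
      rw [if_neg hxy, if_neg hyz]
      have hsub : x - z = (x - y) + (y - z) := by ring
      have h1 : min (x - y).order (y - z).order ≤ (x - z).order := by
        rw [hsub]
        exact HahnSeries.min_order_le_order_add (by rw [← hsub]; exact sub_ne_zero.mpr hxz)
      have hmax : (Fintype.card F : ℝ) ^ (-(x - z).order) ≤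
          max ((Fintype.card F : ℝ) ^ (-(x - y).order))
            ((Fintype.card F : ℝ) ^ (-(y - z).order)) := by
        rcases min_cases (x - y).order (y - z).order with ⟨hm, _⟩ | ⟨hm, _⟩
        · exact le_max_of_le_left (zpow_le_zpow_right₀ hq (neg_le_neg (hm ▸ h1)))
        · exact le_max_of_le_right (zpow_le_zpow_right₀ hq (neg_le_neg (hm ▸ h1)))
      refine hmax.trans (max_le ?_ ?_)
      · nlinarith [zpow_pos hq0 (-(y - z).order)]
      · nlinarith [zpow_pos hq0 (-(x - y).order)]
  eq_of_dist_eq_zero := by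
    intro x y h
    by_contra hne
    have h' : laurentDist F x y = 0 := h
    unfold laurentDist at h'
    rw [if_neg hne] at h'
    have : (0:ℝ) < (Fintype.card F : ℝ) ^ (-(x - y).order) := by
      apply zpow_pos
      exact_mod_cast Fintype.card_pos
    linarith

instance : Fact (Nat.Prime 3) := ⟨by norm_num⟩

/-!
Take `E` to be the image of `{p | coeff (4 ^ m) p = (coeff m p) ^ 2 for all m}`.

If `p + r = 2 q` in `E` with `p ≠ q`, pick `m` with `coeff m p ≠ coeff m q`. The `m`-th digits
of `p, q, r` form a nontrivial arithmetic progression in `𝔽₃`, so they are `0, 1, 2` in some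
order; their squares `0, 1, 1` do not, contradicting the relation between the `4 ^ m`-th digits.

The power series ring is covered by `3 ^ n` cylinders of diameter `3 ^ (-n)`, so `dimH E ≤ 1`.
Reading the free digits, those at positions that are not powers of `4`, as a ternary expansion
maps `E` onto `[0, 1]`. At most `log₄ n + 1` of the first `n` positions are powers of `4`, so
this map is `r`-Hölder for every `r < 1`, whence `1 = dimH [0, 1] ≤ dimH E / r`.
-/

open Set Filter
open scoped NNReal

theorem dimH_le_one_of_covers {X : Type*} [EMetricSpace X] {s : Set X} {c : ℝ≥0∞} (hc : 1 < c)
    (hc_top : c ≠ ∞) {ι : ℕ → Type*} [∀ n, Fintype (ι n)] (t : ∀ n, ι n → Set X)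
    (hst : ∀ n, s ⊆ ⋃ i, t n i) (hcard : ∀ n, (Fintype.card (ι n) : ℝ≥0∞) ≤ c ^ n)
    (hdiam : ∀ n i, Metric.ediam (t n i) ≤ c⁻¹ ^ n) :
    dimH s ≤ 1 := by
  borelize X
  refine dimH_le fun d hd => ?_
  by_contra! hd1
  have hd1' : (1 : ℝ) < d := by exact_mod_cast hd1
  set b := c * c⁻¹ ^ (d : ℝ)
  have hb : b < 1 := calc
    c * c⁻¹ ^ (d : ℝ) < c * c⁻¹ ^ (1 : ℝ) :=
      ENNReal.mul_lt_mul_right (zero_lt_one.trans hc).ne' hc_top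
        (ENNReal.rpow_lt_rpow_of_exponent_gt (ENNReal.inv_pos.2 hc_top)
          (ENNReal.inv_lt_one.2 hc) hd1')
    _ = 1 := by rw [ENNReal.rpow_one, ENNReal.mul_inv_cancel (zero_lt_one.trans hc).ne' hc_top]
  have hsum (n : ℕ) : ∑ i, Metric.ediam (t n i) ^ (d : ℝ) ≤ b ^ n := calc
    ∑ i, Metric.ediam (t n i) ^ (d : ℝ) ≤ ∑ _i : ι n, (c⁻¹ ^ n) ^ (d : ℝ) :=
      Finset.sum_le_sum fun i _ => ENNReal.rpow_le_rpow (hdiam n i) d.2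
    _ = Fintype.card (ι n) * (c⁻¹ ^ (d : ℝ)) ^ n := by
      rw [Finset.sum_const, Finset.card_univ, nsmul_eq_mul, ← ENNReal.rpow_natCast c⁻¹,
        ← ENNReal.rpow_mul, mul_comm (n : ℝ), ENNReal.rpow_mul, ENNReal.rpow_natCast]
    _ ≤ c ^ n * (c⁻¹ ^ (d : ℝ)) ^ n := by gcongr; exact hcard n
    _ = b ^ n := (mul_pow _ _ _).symm
  have hzero : μH[d] s = 0 := by
    refine le_antisymm ?_ zero_le
    calc μH[d] s ≤ liminf (fun n => ∑ i, Metric.ediam (t n i) ^ (d : ℝ)) atTop :=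
          Measure.hausdorffMeasure_le_liminf_sum _ s (fun n => c⁻¹ ^ n)
            (ENNReal.tendsto_pow_atTop_nhds_zero_of_lt_one (ENNReal.inv_lt_one.2 hc)) t
            (.of_forall (hdiam ·)) (.of_forall hst)
      _ ≤ liminf (fun n => b ^ n) atTop := liminf_le_liminf (.of_forall hsum)
      _ = 0 := (ENNReal.tendsto_pow_atTop_nhds_zero_of_lt_one hb).liminf_eq
  simp [hzero] at hd

theorem dimH_image_le_of_forall_holderWith {X Y : Type*} [EMetricSpace X] [EMetricSpace Y]
    {f : X → Y} (hf : ∀ r : ℝ≥0, r < 1 → ∃ C, HolderWith C r f) (s : Set X) :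
    dimH (f '' s) ≤ dimH s := by
  refine ENNReal.le_of_forall_lt_one_mul_le fun a ha => ?_
  lift a to ℝ≥0 using ha.ne_top
  rcases eq_or_ne a 0 with rfl | ha0
  · simp
  obtain ⟨C, hC⟩ := hf a (by exact_mod_cast ha)
  rw [mul_comm, ← ENNReal.le_div_iff_mul_le (by simp [ha0]) (by simp)]
  exact hC.dimH_image_le (pos_iff_ne_zero.2 ha0) s

namespace LaurentSeries

theorem coeff_eq_of_lt_order_sub {R : Type*} [Ring R] {x y : LaurentSeries R} {j : ℤ}
    (hj : j < (x - y).order) : x.coeff j = y.coeff j :=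
  sub_eq_zero.1 (by simpa using HahnSeries.coeff_eq_zero_of_lt_order hj)

variable {F : Type*} [Field F] [Fintype F]

theorem dist_eq_zpow_neg_order {x y : LaurentSeries F} (h : x ≠ y) :
    dist x y = (Fintype.card F : ℝ) ^ (-(x - y).order) :=
  if_neg h

theorem dist_le_zpow_neg {x y : LaurentSeries F} {n : ℤ} (h : ∀ j < n, x.coeff j = y.coeff j) :
    dist x y ≤ (Fintype.card F : ℝ) ^ (-n) := by
  rcases eq_or_ne x y with rfl | hxy
  · rw [dist_self]
    positivity
  have hn : n ≤ (x - y).order :=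
    (HahnSeries.le_order_iff_forall (sub_ne_zero.2 hxy)).2 fun j hj => by simp [h j hj]
  rw [dist_eq_zpow_neg_order hxy]
  exact zpow_le_zpow_right₀ (mod_cast Fintype.card_pos) (neg_le_neg hn)

theorem dimH_range_ofPowerSeries_le_one : dimH (range (HahnSeries.ofPowerSeries ℤ F)) ≤ 1 := by
  have hq : 1 < (Fintype.card F : ℝ≥0∞) := mod_cast Fintype.one_lt_card
  refine dimH_le_one_of_covers hq (ENNReal.natCast_ne_top _)
    (fun n (v : Fin n → F) => HahnSeries.ofPowerSeries ℤ F ''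
      {p | ∀ m : Fin n, PowerSeries.coeff m p = v m}) ?_ (by simp) ?_
  · rintro n _ ⟨p, rfl⟩
    exact mem_iUnion.2 ⟨fun m => PowerSeries.coeff m p, p, fun _ => rfl, rfl⟩
  · rintro n v
    refine Metric.ediam_le ?_
    rintro _ ⟨p, hp, rfl⟩ _ ⟨q, hq, rfl⟩
    have hpq : ∀ j < (n : ℤ), (p : LaurentSeries F).coeff j = (q : LaurentSeries F).coeff j := by
      intro j hj
      rw [PowerSeries.coeff_coe, PowerSeries.coeff_coe]
      split_ifs
      · rfl
      · exact (hp ⟨j.natAbs, by omega⟩).trans (hq ⟨j.natAbs, by omega⟩).symm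
    rw [edist_dist, ← ENNReal.ofReal_natCast, ← ENNReal.ofReal_inv_of_pos (by positivity),
      ← ENNReal.ofReal_pow (by positivity), inv_pow, ← zpow_natCast, ← zpow_neg]
    exact ENNReal.ofReal_le_ofReal (dist_le_zpow_neg hpq)

end LaurentSeries

def NotPowFour (n : ℕ) : Prop := n ∉ range (4 ^ · : ℕ → ℕ)

theorem ofPred_notPowFour_infinite : (Set.ofPred NotPowFour).Infinite := by
  refine infinite_of_injective_forall_mem (f := (3 * ·)) (mul_right_injective₀ three_ne_zero) ?_
  rintro k ⟨m, hm⟩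
  have h3 : 3 ∣ 4 ^ m := ⟨k, hm⟩
  exact absurd (Nat.prime_three.dvd_of_dvd_pow h3) (by norm_num)

theorem le_count_notPowFour_add_log (n : ℕ) :
    n ≤ Nat.count NotPowFour n + (Nat.log 4 n + 1) := by
  have hsub : Finset.range n ⊆ {m ∈ Finset.range n | NotPowFour m} ∪
      (Finset.range (Nat.log 4 n + 1)).image (4 ^ ·) := by
    intro m hm
    by_cases hfree : NotPowFour m
    · exact Finset.mem_union_left _ (Finset.mem_filter.2 ⟨hm, hfree⟩)
    obtain ⟨k, rfl⟩ := not_not.1 hfree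
    refine Finset.mem_union_right _ (Finset.mem_image_of_mem _ (Finset.mem_range.2 ?_))
    have := Nat.log_mono_right (b := 4) (Finset.mem_range.1 hm).le
    rw [Nat.log_pow (by norm_num)] at this
    omega
  calc n = (Finset.range n).card := (Finset.card_range n).symm
    _ ≤ _ := (Finset.card_le_card hsub).trans (Finset.card_union_le _ _)
    _ ≤ _ := by
      rw [Nat.count_eq_card_filter_range]
      gcongr
      exact Finset.card_image_le.trans (Finset.card_range _).le

theorem mul_log_four_le (K n : ℕ) : K * Nat.log 4 n ≤ n + K * K := by
  rcases le_or_gt (Nat.log 4 n) K with h | h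
  · exact (Nat.mul_le_mul_left K h).trans (Nat.le_add_left _ _)
  · rcases eq_or_ne n 0 with rfl | hn
    · simp
    calc K * Nat.log 4 n ≤ Nat.log 4 n * Nat.log 4 n := Nat.mul_le_mul_right _ h.le
      _ ≤ 2 ^ Nat.log 4 n * 2 ^ Nat.log 4 n :=
        Nat.mul_le_mul (Nat.lt_two_pow_self).le (Nat.lt_two_pow_self).le
      _ = 4 ^ Nat.log 4 n := by rw [← mul_pow]; norm_num
      _ ≤ n := Nat.pow_log_le_self 4 hn
      _ ≤ n + K * K := Nat.le_add_right _ _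

theorem exists_mul_le_count_notPowFour {r : ℝ} (hr : r < 1) :
    ∃ B : ℕ, ∀ n : ℕ, r * n ≤ Nat.count NotPowFour n + B := by
  obtain ⟨K, hK⟩ := exists_nat_gt (1 - r)⁻¹
  have hK0 : (0 : ℝ) < K := (inv_pos.2 (sub_pos.2 hr)).trans hK
  have hrK : r * K ≤ K - 1 := by
    have := (inv_lt_iff_one_lt_mul₀ (sub_pos.2 hr)).1 hK
    nlinarith
  refine ⟨K + 1, fun n => ?_⟩
  have h1 : (n : ℝ) ≤ Nat.count NotPowFour n + (Nat.log 4 n + 1) :=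
    mod_cast le_count_notPowFour_add_log n
  have h2 : (K : ℝ) * Nat.log 4 n ≤ n + K * K := mod_cast mul_log_four_le K n
  refine le_of_mul_le_mul_left ?_ hK0
  push_cast
  nlinarith [(Nat.cast_nonneg n : (0 : ℝ) ≤ n)]

theorem holderWith_of_dist_le {X Y : Type*} [PseudoMetricSpace X] [PseudoMetricSpace Y]
    {C r : ℝ≥0} {f : X → Y} (h : ∀ x y, dist (f x) (f y) ≤ C * dist x y ^ (r : ℝ)) :
    HolderWith C r f := fun x y => by
  rw [edist_dist, edist_dist, ENNReal.ofReal_rpow_of_nonneg dist_nonneg r.coe_nonneg,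
    ← ENNReal.ofReal_coe_nnreal, ← ENNReal.ofReal_mul C.coe_nonneg]
  exact ENNReal.ofReal_le_ofReal (h x y)

noncomputable def ofFreeDigits (x : LaurentSeries (ZMod 3)) : ℝ :=
  Real.ofDigits fun j => (ZMod.finEquiv 3).symm (x.coeff (Nat.nth NotPowFour j))

theorem abs_ofFreeDigits_sub_le {x y : LaurentSeries (ZMod 3)} {n : ℕ}
    (h : ∀ m < n, x.coeff (m : ℤ) = y.coeff m) :
    |ofFreeDigits x - ofFreeDigits y| ≤ ((3 : ℝ) ^ Nat.count NotPowFour n)⁻¹ :=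
  Real.abs_ofDigits_sub_ofDigits_le fun _ hi => congrArg _ (h _ (Nat.nth_lt_of_lt_count hi))

theorem holderWith_ofFreeDigits {r : ℝ≥0} (hr : r < 1) : ∃ C, HolderWith C r ofFreeDigits := by
  obtain ⟨B, hB⟩ := exists_mul_le_count_notPowFour (mod_cast hr : (r : ℝ) < 1)
  refine ⟨3 ^ B, holderWith_of_dist_le fun x y => ?_⟩
  rcases eq_or_ne x y with rfl | hxy
  · simp only [dist_self]
    positivity
  set n := (x - y).order
  have hdiff :
      |ofFreeDigits x - ofFreeDigits y| ≤ (3 : ℝ) ^ (-(Nat.count NotPowFour n.toNat : ℝ)) := by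
    rw [Real.rpow_neg (by norm_num), Real.rpow_natCast]
    exact abs_ofFreeDigits_sub_le fun m hm =>
      LaurentSeries.coeff_eq_of_lt_order_sub (by omega)
  have hexp : -(Nat.count NotPowFour n.toNat : ℝ) ≤ B + -n * r := by
    have hcount := hB n.toNat
    have hn : (n : ℝ) ≤ n.toNat := mod_cast Int.self_le_toNat n
    nlinarith [r.coe_nonneg]
  have hdist : dist x y = (3 : ℝ) ^ (-n : ℝ) := by
    rw [LaurentSeries.dist_eq_zpow_neg_order hxy, ZMod.card, ← Real.rpow_intCast]
    push_cast
    rfl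
  rw [Real.dist_eq, hdist, ← Real.rpow_mul (by norm_num), NNReal.coe_pow, NNReal.coe_ofNat,
    ← Real.rpow_natCast, ← Real.rpow_add (by norm_num)]
  exact hdiff.trans (Real.rpow_le_rpow_of_exponent_le (by norm_num) hexp)

theorem ZMod.sq_add_sq_ne_of_threeAP {a b c : ZMod 3} (habc : a + c = b + b) (hab : a ≠ b) :
    a ^ 2 + c ^ 2 ≠ b ^ 2 + b ^ 2 := by
  revert a b c
  decide

def sqCoeffSet (φ : ℕ → ℕ) : Set (PowerSeries (ZMod 3)) :=
  {p | ∀ m, PowerSeries.coeff (φ m) p = PowerSeries.coeff m p ^ 2}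

theorem threeAPFree_sqCoeffSet (φ : ℕ → ℕ) : ThreeAPFree (sqCoeffSet φ) := by
  intro p hp q hq r hr hpr
  by_contra hpq
  obtain ⟨m, hm⟩ : ∃ m, PowerSeries.coeff m p ≠ PowerSeries.coeff m q :=
    not_forall.1 (mt PowerSeries.ext hpq)
  have hcoeff (n : ℕ) : PowerSeries.coeff n p + PowerSeries.coeff n r =
      PowerSeries.coeff n q + PowerSeries.coeff n q := by
    simpa using congrArg (PowerSeries.coeff n) hpr
  refine ZMod.sq_add_sq_ne_of_threeAP (hcoeff m) hm ?_
  rw [← hp, ← hq, ← hr]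
  exact hcoeff (φ m)

noncomputable def fillPowFour {R : Type*} [Monoid R] (a : ℕ → R) (n : ℕ) : R :=
  if h : n ∈ range (4 ^ · : ℕ → ℕ) then fillPowFour a (Nat.log 4 n) ^ 2 else a n
termination_by n
decreasing_by
  obtain ⟨m, rfl⟩ := h
  exact Nat.log_lt_self 4 (by positivity)

theorem fillPowFour_pow_four {R : Type*} [Monoid R] (a : ℕ → R) (m : ℕ) :
    fillPowFour a (4 ^ m) = fillPowFour a m ^ 2 := by
  rw [fillPowFour, dif_pos (mem_range_self m), Nat.log_pow (by norm_num)]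

theorem fillPowFour_of_notPowFour {R : Type*} [Monoid R] (a : ℕ → R) {n : ℕ}
    (hn : NotPowFour n) : fillPowFour a n = a n := by
  rw [fillPowFour, dif_neg hn]

theorem Icc_subset_ofFreeDigits_image :
    Icc 0 1 ⊆ ofFreeDigits '' (HahnSeries.ofPowerSeries ℤ (ZMod 3) '' sqCoeffSet (4 ^ ·)) := by
  intro y hy
  obtain ⟨d, -, rfl⟩ := Real.ofDigits_SurjOn (b := 3) (by norm_num) hy
  let p : PowerSeries (ZMod 3) :=
    .mk (fillPowFour fun n => ZMod.finEquiv 3 (d (Nat.count NotPowFour n)))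
  have hp : p ∈ sqCoeffSet (4 ^ ·) := fun m => by
    simp only [p, PowerSeries.coeff_mk, fillPowFour_pow_four]
  refine ⟨p, ⟨p, hp, rfl⟩, congrArg _ (funext fun j => ?_)⟩
  rw [HahnSeries.ofPowerSeries_apply_coeff, PowerSeries.coeff_mk,
    fillPowFour_of_notPowFour _ (Nat.nth_mem_of_infinite ofPred_notPowFour_infinite j),
    Nat.count_nth_of_infinite ofPred_notPowFour_infinite, RingEquiv.symm_apply_apply]

/-- **A counterexample to a limiting Hausdorff-dimension version of the capset problem.**
There is a subset `E` of the power series ring `𝔽₃⟦t⟧ ⊆ 𝔽₃((t))` of Hausdorff dimension `1`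
containing no three distinct points `x, y, z` with `x + y + z = 0` (equivalently `x + z = 2y`,
since the characteristic is `3`); so no Hausdorff-dimension analogue of the capset theorem
holds in this limiting setting. -/
theorem capset_counterexample_in_F3_power_series :
    ∃ E : Set (LaurentSeries (ZMod 3)),
      E ⊆ Set.range
        ((HahnSeries.ofPowerSeries ℤ (ZMod 3)) :
          PowerSeries (ZMod 3) → LaurentSeries (ZMod 3)) ∧
      dimH E = 1 ∧
      ¬ ∃ x y z : LaurentSeries (ZMod 3), x ∈ E ∧ y ∈ E ∧ z ∈ E ∧
        x ≠ y ∧ y ≠ z ∧ x ≠ z ∧ x + y + z = 0 := by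
  set E := HahnSeries.ofPowerSeries ℤ (ZMod 3) '' sqCoeffSet (4 ^ ·)
  refine ⟨E, image_subset_range _ _, le_antisymm ?_ ?_, ?_⟩
  · exact (dimH_mono (image_subset_range _ _)).trans
      LaurentSeries.dimH_range_ofPowerSeries_le_one
  · calc (1 : ℝ≥0∞) = dimH (Icc (0 : ℝ) 1) := by
          rw [Real.dimH_of_nonempty_interior (by simp), Module.finrank_self, Nat.cast_one]
      _ ≤ dimH (ofFreeDigits '' E) := dimH_mono Icc_subset_ofFreeDigits_image
      _ ≤ dimH E := dimH_image_le_of_forall_holderWith (fun _ => holderWith_ofFreeDigits) E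
  · rintro ⟨_, _, _, ⟨p, hp, rfl⟩, ⟨q, hq, rfl⟩, ⟨r, hr, rfl⟩, hpq, -, -, hsum⟩
    have hpqr : p + q + r = 0 := HahnSeries.ofPowerSeries_injective (Γ := ℤ) (by simpa using hsum)
    have h3 : (3 : PowerSeries (ZMod 3)) = 0 := by
      rw [← map_ofNat PowerSeries.C 3, show (3 : ZMod 3) = 0 from rfl, map_zero]
    have hap : p + r = q + q := by linear_combination hpqr - q * h3
    exact hpq (congrArg _ (threeAPFree_sqCoeffSet _ hp hq hr hap))
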